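/- Let β(z) = z + Σ_{n≥1} t_n z^{n+1}/(n+1)! be a formal power series over ℚ[t_1, t_2, ...]. For k ≥ 0 and n ≥ k, define Θ_k^{n−k} := (n+1)! · [z^{n+1}] β(z)^{k+1} (the coefficient of z^{n+1} in β(z)^{k+1}, scaled by (n+1)!). Then Θ_k^{n−k} is a polynomial in t_1,...,t_{n−k} with nonnegative integer coefficients, provided all t_j are treated as formal variables. -/

import Mathlib

/-!
The Hurwitz coefficients `cₘ = m! [zᵐ] f` of a product are `∑ (m choose a) cₐ(f) c_{m-a}(g)`, so
series whose Hurwitz coefficients are polynomials with coefficients in ℕ are closed under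
multiplication. Since the variables of a product are among those of its factors, this stays true
when, for a series divisible by `z^K`, the coefficient `cₘ` may only involve `t₁, …, t_{m-K}`:
orders add up under multiplication. The series `β` has order 1 and `cₘ(β) = t_{m-1}`, so
`β^(k+1)` has order `k + 1` and `c_{n+1}(β^(k+1))` involves only `t₁, …, t_{n-k}`.
-/

open Finset
open scoped Nat

namespace PowerSeries

variable {R : Type*} [CommSemiring R]

theorem factorial_mul_coeff_mul (m : ℕ) (f g : R⟦X⟧) :
    (m ! : R) * coeff m (f * g) = ∑ p ∈ antidiagonal m,
      (m.choose p.1 : R) * ((p.1 ! : R) * coeff p.1 f) * ((p.2 ! : R) * coeff p.2 g) := by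
  rw [coeff_mul, mul_sum]
  refine sum_congr rfl fun p hp => ?_
  obtain rfl := mem_antidiagonal.mp hp
  have h := Nat.choose_mul_factorial_mul_factorial (Nat.le_add_right p.1 p.2)
  rw [Nat.add_sub_cancel_left] at h
  rw [← h]
  push_cast
  ring

/-- `f = ∑ cₘ zᵐ / m!` with `cₘ = 0` for `m < K` and `cₘ ∈ S (m - K)`. -/
def IsHurwitzOfOrder (S : ℕ → Subsemiring R) (K : ℕ) (f : R⟦X⟧) : Prop :=
  X ^ K ∣ f ∧ ∀ m, (m ! : R) * coeff m f ∈ S (m - K)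

namespace IsHurwitzOfOrder

variable {S : ℕ → Subsemiring R} {K L : ℕ} {f g : R⟦X⟧}

theorem one (S : ℕ → Subsemiring R) : IsHurwitzOfOrder S 0 (1 : R⟦X⟧) := by
  refine ⟨by simp, fun m => ?_⟩
  rcases m with _ | m
  · simp [one_mem]
  · simp [zero_mem]

theorem mul (hS : Monotone S) (hf : IsHurwitzOfOrder S K f) (hg : IsHurwitzOfOrder S L g) :
    IsHurwitzOfOrder S (K + L) (f * g) := by
  refine ⟨pow_add (X : R⟦X⟧) K L ▸ mul_dvd_mul hf.1 hg.1, fun m => ?_⟩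
  rw [factorial_mul_coeff_mul]
  refine sum_mem fun p hp => ?_
  have hpm := mem_antidiagonal.mp hp
  by_cases hK : p.1 < K
  · simp [X_pow_dvd_iff.mp hf.1 _ hK]
  by_cases hL : p.2 < L
  · simp [X_pow_dvd_iff.mp hg.1 _ hL]
  exact mul_mem (mul_mem (natCast_mem _ _) (hS (by omega) (hf.2 _))) (hS (by omega) (hg.2 _))

theorem pow (hS : Monotone S) (hf : IsHurwitzOfOrder S K f) (n : ℕ) :
    IsHurwitzOfOrder S (n * K) (f ^ n) := by
  induction n with
  | zero => simpa using one S
  | succ n ih => simpa [pow_succ, add_mul] using ih.mul hS hf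

end IsHurwitzOfOrder

end PowerSeries

open MvPolynomial

noncomputable def natPolyIn (j : ℕ) : Subsemiring (MvPolynomial ℕ ℚ) :=
  (supported ℕ (Set.Icc 1 j)).toSubsemiring.map (MvPolynomial.map (Nat.castRingHom ℚ))

theorem natPolyIn_mono : Monotone natPolyIn := fun _ _ hij =>
  (Subsemiring.gc_map_comap _).monotone_l fun _ hp =>
    supported_mono (Set.Icc_subset_Icc_right hij) hp

noncomputable def genericBeta : PowerSeries (MvPolynomial ℕ ℚ) :=
  PowerSeries.mk fun m => if m = 0 then 0 else if m = 1 then 1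
    else X (m - 1) * C ((Nat.factorial m : ℚ))⁻¹

theorem isHurwitzOfOrder_genericBeta : PowerSeries.IsHurwitzOfOrder natPolyIn 1 genericBeta := by
  refine ⟨by simpa using PowerSeries.X_dvd_iff.mpr (by simp [genericBeta]), fun m => ?_⟩
  rcases m with _ | _ | m
  · simp [genericBeta, zero_mem]
  · simp [genericBeta, one_mem]
  · refine Subsemiring.mem_map.mpr ⟨X (m + 1), X_mem_supported.mpr (by simp), ?_⟩
    rw [map_X, genericBeta, PowerSeries.coeff_mk, if_neg (by omega), if_neg (by omega),
      Nat.add_sub_cancel, mul_left_comm, ← C_eq_coe_nat, ← C_mul,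
      mul_inv_cancel₀ (mod_cast (m + 2).factorial_ne_zero), C_1, mul_one]

open MvPolynomial in
theorem stmt10_general (n k : ℕ) (β : PowerSeries (MvPolynomial ℕ ℚ))
    (hβ : β = PowerSeries.mk fun m => if m = 0 then 0 else if m = 1 then 1
      else X (m - 1) * C ((Nat.factorial m : ℚ))⁻¹) :
    ∃ p : MvPolynomial ℕ ℕ,
      (∀ i ∈ p.vars, 1 ≤ i ∧ i ≤ n - k) ∧
      (Nat.factorial (n + 1) : MvPolynomial ℕ ℚ) *
          PowerSeries.coeff (R := MvPolynomial ℕ ℚ) (n + 1) (β ^ (k + 1)) =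
        MvPolynomial.map (Nat.castRingHom ℚ) p := by
  obtain ⟨p, hp, hpβ⟩ := Subsemiring.mem_map.mp
    ((isHurwitzOfOrder_genericBeta.pow natPolyIn_mono (k + 1)).2 (n + 1))
  refine ⟨p, fun i hi => ?_, hβ ▸ hpβ.symm⟩
  have := mem_supported.mp hp hi
  simp only [Set.mem_Icc, mul_one] at this
  omega

open MvPolynomial in
/-- For β(z) = z + Σ_{n≥1} t_n z^{n+1}/(n+1)! over ℚ[t_1,t_2,...] and k ≤ n,
the element Θ_k^{n−k} := (n+1)!·[z^{n+1}] β(z)^{k+1} is a polynomial in t_1,...,t_{n−k}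
with nonnegative integer coefficients. -/
theorem stmt10 (n k : ℕ) (hkn : k ≤ n) (β : PowerSeries (MvPolynomial ℕ ℚ))
    (hβ : β = PowerSeries.mk fun m => if m = 0 then 0 else if m = 1 then 1
      else X (m - 1) * C ((Nat.factorial m : ℚ))⁻¹) :
    ∃ p : MvPolynomial ℕ ℕ,
      (∀ i ∈ p.vars, 1 ≤ i ∧ i ≤ n - k) ∧
      (Nat.factorial (n + 1) : MvPolynomial ℕ ℚ) *
          PowerSeries.coeff (R := MvPolynomial ℕ ℚ) (n + 1) (β ^ (k + 1)) =
        MvPolynomial.map (Nat.castRingHom ℚ) p :=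
  stmt10_general n k β hβ
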